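/- arXiv:1101.5395 — 3 statements merged into one kernel-verified Lean document; each statement's English description precedes it below -/
import Mathlib

section
/- Fix nonnegative integers k, p and r with r ≤ p. The map μ ↦ α, where α(t) = μ(t) - r for t ∈ [0, k-1] and α(t) = μ(t+r) - r for t ∈ [k, k+p-r-1], is a bijection from the set of (k,p)-shuffles μ satisfying r ≤ μ(0) onto the set Sh(k, p-r) of (k, p-r)-shuffles; its inverse sends α to the permutation μ with μ(t) = α(t)+r for t ∈ [0,k-1], μ(t) = t-k for t ∈ [k, k+r-1], and μ(t) = α(t-r)+r for t ∈ [k+r, k+p-1]. -/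
/-!
If `r ≤ μ(0)`, none of the values `0, …, r-1` is taken on the increasing first block of `μ`,
so the increasing second block starts with them: `μ(k+i) = i` for `i < r`, and `μ ≥ r` everywhere
else. Cutting out the block `[k, k+r)` and subtracting `r` therefore loses nothing, and putting it
back inverts the cut.
-/

/-- A permutation `γ` of `Fin n` is an `(a, n-a)`-shuffle if it is strictly increasing
on `{0, ..., a-1}` and on `{a, ..., n-1}`. -/
def IsShuffle (a : ℕ) {n : ℕ} (γ : Equiv.Perm (Fin n)) : Prop :=
  (∀ c d : Fin n, (c : ℕ) < d → (d : ℕ) < a → γ c < γ d) ∧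
  (∀ c d : Fin n, a ≤ (c : ℕ) → (c : ℕ) < (d : ℕ) → γ c < γ d)

/-- The value of a permutation of `Fin n` on a natural number (junk value `i` for `i ≥ n`). -/
def permNat {n : ℕ} (γ : Equiv.Perm (Fin n)) (i : ℕ) : ℕ :=
  if h : i < n then (γ ⟨i, h⟩ : ℕ) else i

section permNat

variable {n : ℕ}

lemma permNat_of_lt (γ : Equiv.Perm (Fin n)) {i : ℕ} (hi : i < n) :
    permNat γ i = γ ⟨i, hi⟩ :=
  dif_pos hi

lemma permNat_lt (γ : Equiv.Perm (Fin n)) {i : ℕ} (hi : i < n) : permNat γ i < n := by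
  rw [permNat_of_lt γ hi]
  exact Fin.is_lt _

lemma permNat_injOn (γ : Equiv.Perm (Fin n)) : Set.InjOn (permNat γ) (Set.Iio n) := by
  intro i hi j hj h
  rw [permNat_of_lt γ hi, permNat_of_lt γ hj] at h
  exact congrArg Fin.val (γ.injective (Fin.ext h))

lemma exists_permNat_eq (γ : Equiv.Perm (Fin n)) {j : ℕ} (hj : j < n) :
    ∃ i < n, permNat γ i = j :=
  ⟨γ.symm ⟨j, hj⟩, Fin.is_lt _, by simp [permNat_of_lt]⟩

lemma Equiv.Perm.ext_permNat {γ δ : Equiv.Perm (Fin n)}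
    (h : ∀ i < n, permNat γ i = permNat δ i) : γ = δ := by
  ext i
  simpa [permNat_of_lt _ i.is_lt] using h i i.is_lt

lemma isShuffle_iff_strictMonoOn (γ : Equiv.Perm (Fin n)) {a : ℕ} (ha : a ≤ n) :
    IsShuffle a γ ↔
      StrictMonoOn (permNat γ) (Set.Iio a) ∧ StrictMonoOn (permNat γ) (Set.Ico a n) := by
  constructor
  · rintro ⟨hleft, hright⟩
    refine ⟨fun c hc d hd hcd => ?_, fun c hc d hd hcd => ?_⟩
    · rw [permNat_of_lt γ (hc.trans_le ha), permNat_of_lt γ (hd.trans_le ha)]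
      exact hleft _ _ hcd hd
    · rw [permNat_of_lt γ hc.2, permNat_of_lt γ hd.2]
      exact hright _ _ hc.1 hcd
  · rintro ⟨hleft, hright⟩
    refine ⟨fun c d hcd hd => ?_, fun c d hc hcd => ?_⟩
    · simpa [permNat_of_lt] using hleft (hcd.trans hd) hd hcd
    · simpa [permNat_of_lt] using hright ⟨hc, c.is_lt⟩ ⟨hc.trans hcd.le, d.is_lt⟩ hcd

lemma IsShuffle.strictMonoOn_Iio {a : ℕ} {γ : Equiv.Perm (Fin n)} (hγ : IsShuffle a γ)
    (ha : a ≤ n) : StrictMonoOn (permNat γ) (Set.Iio a) :=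
  ((isShuffle_iff_strictMonoOn γ ha).1 hγ).1

lemma IsShuffle.strictMonoOn_Ico {a : ℕ} {γ : Equiv.Perm (Fin n)} (hγ : IsShuffle a γ)
    (ha : a ≤ n) : StrictMonoOn (permNat γ) (Set.Ico a n) :=
  ((isShuffle_iff_strictMonoOn γ ha).1 hγ).2

noncomputable def permOfInjOn (f : ℕ → ℕ) (hmaps : Set.MapsTo f (Set.Iio n) (Set.Iio n))
    (hinj : Set.InjOn f (Set.Iio n)) : Equiv.Perm (Fin n) :=
  Equiv.ofBijective (fun i => ⟨f i, hmaps i.is_lt⟩) <| Finite.injective_iff_bijective.mp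
    fun i j h => Fin.ext (hinj i.is_lt j.is_lt (congrArg Fin.val h))

lemma permNat_permOfInjOn {f : ℕ → ℕ} (hmaps : Set.MapsTo f (Set.Iio n) (Set.Iio n))
    (hinj : Set.InjOn f (Set.Iio n)) {i : ℕ} (hi : i < n) :
    permNat (permOfInjOn f hmaps hinj) i = f i :=
  permNat_of_lt _ hi

lemma isShuffle_permOfInjOn {f : ℕ → ℕ} (hmaps : Set.MapsTo f (Set.Iio n) (Set.Iio n))
    (hinj : Set.InjOn f (Set.Iio n)) {a : ℕ} (ha : a ≤ n) (hleft : StrictMonoOn f (Set.Iio a))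
    (hright : StrictMonoOn f (Set.Ico a n)) : IsShuffle a (permOfInjOn f hmaps hinj) := by
  have heq : (Set.Iio n).EqOn f (permNat (permOfInjOn f hmaps hinj)) :=
    fun i hi => (permNat_permOfInjOn hmaps hinj hi).symm
  rw [isShuffle_iff_strictMonoOn _ ha]
  exact ⟨hleft.congr (heq.mono (Set.Iio_subset_Iio ha)),
    hright.congr (heq.mono Set.Ico_subset_Iio_self)⟩

end permNat

section shuffle

variable {k p r : ℕ} {μ : Equiv.Perm (Fin (k + p))}

lemma IsShuffle.le_permNat_of_lt (hμ : IsShuffle k μ) (h0 : k = 0 ∨ r ≤ permNat μ 0) {t : ℕ}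
    (ht : t < k) : r ≤ permNat μ t := by
  rcases h0 with h0 | h0
  · omega
  · exact h0.trans <| (hμ.strictMonoOn_Iio (Nat.le_add_right k p)).monotoneOn
      ((Nat.zero_le t).trans_lt ht) ht (Nat.zero_le t)

lemma IsShuffle.permNat_add_eq (hμ : IsShuffle k μ) (h0 : k = 0 ∨ r ≤ permNat μ 0) (hrp : r ≤ p)
    {i : ℕ} (hi : i < r) : permNat μ (k + i) = i := by
  induction i using Nat.strong_induction_on with
  | _ i ih =>
  obtain ⟨t, ht, hti⟩ := exists_permNat_eq μ (show i < k + p by omega)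
  have hkt : k ≤ t := by
    by_contra! htk
    have := hμ.le_permNat_of_lt h0 htk
    omega
  rcases lt_trichotomy t (k + i) with hlt | rfl | hgt
  · have := ih (t - k) (by omega) (by omega)
    rw [Nat.add_sub_cancel' hkt] at this
    omega
  · exact hti
  · -- the value `μ(k+i) < i` would also be taken at `k + μ(k+i)`
    have hm : permNat μ (k + i) < i :=
      hti ▸ hμ.strictMonoOn_Ico (Nat.le_add_right k p) ⟨Nat.le_add_right k i, by omega⟩
        ⟨hkt, ht⟩ hgt
    have := permNat_injOn μ (show k + permNat μ (k + i) < k + p by omega)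
      (show k + i < k + p by omega) (ih _ hm (hm.trans hi))
    omega

lemma IsShuffle.le_permNat (hμ : IsShuffle k μ) (h0 : k = 0 ∨ r ≤ permNat μ 0) (hrp : r ≤ p)
    {t : ℕ} (ht : t < k + p) (hblock : t < k ∨ k + r ≤ t) : r ≤ permNat μ t := by
  rcases hblock with htk | hkrt
  · exact hμ.le_permNat_of_lt h0 htk
  · by_contra! hlt
    have := permNat_injOn μ (show k + permNat μ t < k + p by omega) ht
      (hμ.permNat_add_eq h0 hrp hlt)
    omega

end shuffle

section restrict

variable {k p r : ℕ}

def shuffleRestrict (k r : ℕ) (f : ℕ → ℕ) (t : ℕ) : ℕ :=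
  if t < k then f t - r else f (t + r) - r

def shuffleExtend (k r : ℕ) (g : ℕ → ℕ) (t : ℕ) : ℕ :=
  if t < k then g t + r else if t < k + r then t - k else g (t - r) + r

lemma mapsTo_shuffleRestrict (μ : Equiv.Perm (Fin (k + p))) :
    Set.MapsTo (shuffleRestrict k r (permNat μ)) (Set.Iio (k + p - r)) (Set.Iio (k + p - r)) := by
  intro t ht
  simp only [Set.mem_Iio, shuffleRestrict] at ht ⊢
  split_ifs
  · have := permNat_lt μ (show t < k + p by omega)
    omega
  · have := permNat_lt μ (show t + r < k + p by omega)
    omega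

lemma injOn_shuffleRestrict {μ : Equiv.Perm (Fin (k + p))} (hμ : IsShuffle k μ)
    (h0 : k = 0 ∨ r ≤ permNat μ 0) (hrp : r ≤ p) :
    Set.InjOn (shuffleRestrict k r (permNat μ)) (Set.Iio (k + p - r)) := by
  have hinj : ∀ a b, a < k + p → b < k + p → (a < k ∨ k + r ≤ a) → (b < k ∨ k + r ≤ b) →
      permNat μ a - r = permNat μ b - r → a = b := by
    intro a b ha hb ha' hb' hab
    have := hμ.le_permNat h0 hrp ha ha'
    have := hμ.le_permNat h0 hrp hb hb'
    exact permNat_injOn μ ha hb (by omega)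
  intro t₁ h₁ t₂ h₂ h
  simp only [Set.mem_Iio, shuffleRestrict] at h₁ h₂ h
  split_ifs at h <;> have := hinj _ _ (by omega) (by omega) (by omega) (by omega) h <;> omega

lemma mapsTo_shuffleExtend (α : Equiv.Perm (Fin (k + p - r))) (hrp : r ≤ p) :
    Set.MapsTo (shuffleExtend k r (permNat α)) (Set.Iio (k + p)) (Set.Iio (k + p)) := by
  intro t ht
  simp only [Set.mem_Iio, shuffleExtend] at ht ⊢
  split_ifs
  · have := permNat_lt α (show t < k + p - r by omega)
    omega
  · omega
  · have := permNat_lt α (show t - r < k + p - r by omega)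
    omega

lemma injOn_shuffleExtend (α : Equiv.Perm (Fin (k + p - r))) (hrp : r ≤ p) :
    Set.InjOn (shuffleExtend k r (permNat α)) (Set.Iio (k + p)) := by
  have hinj : ∀ a b, a < k + p - r → b < k + p - r → permNat α a + r = permNat α b + r → a = b :=
    fun a b ha hb hab => permNat_injOn α ha hb (Nat.add_right_cancel hab)
  intro t₁ h₁ t₂ h₂ h
  simp only [Set.mem_Iio, shuffleExtend] at h₁ h₂ h
  split_ifs at h <;> first | omega | (have := hinj _ _ (by omega) (by omega) h; omega)

noncomputable def restrictShuffle {μ : Equiv.Perm (Fin (k + p))} (hμ : IsShuffle k μ)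
    (h0 : k = 0 ∨ r ≤ permNat μ 0) (hrp : r ≤ p) : Equiv.Perm (Fin (k + p - r)) :=
  permOfInjOn _ (mapsTo_shuffleRestrict μ) (injOn_shuffleRestrict hμ h0 hrp)

noncomputable def extendShuffle (α : Equiv.Perm (Fin (k + p - r))) (hrp : r ≤ p) :
    Equiv.Perm (Fin (k + p)) :=
  permOfInjOn _ (mapsTo_shuffleExtend α hrp) (injOn_shuffleExtend α hrp)

lemma permNat_restrictShuffle {μ : Equiv.Perm (Fin (k + p))} (hμ : IsShuffle k μ)
    (h0 : k = 0 ∨ r ≤ permNat μ 0) (hrp : r ≤ p) {t : ℕ} (ht : t < k + p - r) :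
    permNat (restrictShuffle hμ h0 hrp) t =
      if t < k then permNat μ t - r else permNat μ (t + r) - r :=
  permNat_permOfInjOn _ _ ht

lemma permNat_extendShuffle (α : Equiv.Perm (Fin (k + p - r))) (hrp : r ≤ p) {t : ℕ}
    (ht : t < k + p) :
    permNat (extendShuffle α hrp) t =
      if t < k then permNat α t + r else if t < k + r then t - k else permNat α (t - r) + r :=
  permNat_permOfInjOn _ _ ht

lemma isShuffle_restrictShuffle {μ : Equiv.Perm (Fin (k + p))} (hμ : IsShuffle k μ)
    (h0 : k = 0 ∨ r ≤ permNat μ 0) (hrp : r ≤ p) : IsShuffle k (restrictShuffle hμ h0 hrp) := by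
  refine isShuffle_permOfInjOn _ _ (by omega) ?_ ?_
  · intro c hc d hd hcd
    have := hμ.le_permNat_of_lt h0 hc
    have := hμ.strictMonoOn_Iio (Nat.le_add_right k p) hc hd hcd
    simp only [shuffleRestrict, if_pos (show c < k from hc), if_pos (show d < k from hd)]
    omega
  · rintro c ⟨hkc, hc⟩ d ⟨hkd, hd⟩ hcd
    have := hμ.le_permNat h0 hrp (t := c + r) (by omega) (by omega)
    have := hμ.strictMonoOn_Ico (Nat.le_add_right k p)
      (show c + r ∈ Set.Ico k (k + p) from ⟨by omega, by omega⟩)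
      (show d + r ∈ Set.Ico k (k + p) from ⟨by omega, by omega⟩) (by omega)
    simp only [shuffleRestrict, if_neg (show ¬c < k by omega), if_neg (show ¬d < k by omega)]
    omega

lemma isShuffle_extendShuffle {α : Equiv.Perm (Fin (k + p - r))} (hα : IsShuffle k α)
    (hrp : r ≤ p) : IsShuffle k (extendShuffle α hrp) := by
  refine isShuffle_permOfInjOn _ _ (by omega) ?_ ?_
  · intro c hc d hd hcd
    have := hα.strictMonoOn_Iio (by omega) hc hd hcd
    simp only [shuffleExtend, if_pos (show c < k from hc), if_pos (show d < k from hd)]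
    omega
  · rintro c ⟨hkc, hc⟩ d ⟨hkd, hd⟩ hcd
    simp only [shuffleExtend, if_neg (show ¬c < k by omega), if_neg (show ¬d < k by omega)]
    split_ifs with hcr hdr hdr
    · omega
    · omega
    · omega
    · have := hα.strictMonoOn_Ico (by omega)
        (show c - r ∈ Set.Ico k (k + p - r) from ⟨by omega, by omega⟩)
        (show d - r ∈ Set.Ico k (k + p - r) from ⟨by omega, by omega⟩) (by omega)
      omega

lemma le_permNat_zero_extendShuffle (α : Equiv.Perm (Fin (k + p - r))) (hrp : r ≤ p) :
    k = 0 ∨ r ≤ permNat (extendShuffle α hrp) 0 := by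
  rcases k.eq_zero_or_pos with hk | hk
  · exact Or.inl hk
  · rw [permNat_extendShuffle α hrp (by omega), if_pos hk]
    omega

lemma extendShuffle_restrictShuffle {μ : Equiv.Perm (Fin (k + p))} (hμ : IsShuffle k μ)
    (h0 : k = 0 ∨ r ≤ permNat μ 0) (hrp : r ≤ p) :
    extendShuffle (restrictShuffle hμ h0 hrp) hrp = μ := by
  refine Equiv.Perm.ext_permNat fun t ht => ?_
  rw [permNat_extendShuffle _ hrp ht]
  split_ifs with h1 h2
  · rw [permNat_restrictShuffle hμ h0 hrp (by omega), if_pos h1]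
    have := hμ.le_permNat_of_lt h0 h1
    omega
  · have := hμ.permNat_add_eq h0 hrp (i := t - k) (by omega)
    rw [Nat.add_sub_cancel' (by omega)] at this
    exact this.symm
  · rw [permNat_restrictShuffle hμ h0 hrp (by omega), if_neg (show ¬t - r < k by omega),
      Nat.sub_add_cancel (show r ≤ t by omega)]
    have := hμ.le_permNat h0 hrp ht (Or.inr (by omega))
    omega

lemma restrictShuffle_extendShuffle {α : Equiv.Perm (Fin (k + p - r))} (hα : IsShuffle k α)
    (hrp : r ≤ p) :
    restrictShuffle (isShuffle_extendShuffle hα hrp) (le_permNat_zero_extendShuffle α hrp) hrp = α := by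
  refine Equiv.Perm.ext_permNat fun t ht => ?_
  rw [permNat_restrictShuffle _ _ hrp ht]
  split_ifs with h1
  · rw [permNat_extendShuffle α hrp (by omega), if_pos h1, Nat.add_sub_cancel]
  · rw [permNat_extendShuffle α hrp (by omega), if_neg (by omega), if_neg (by omega),
      Nat.add_sub_cancel, Nat.add_sub_cancel]

end restrict

/-- The map `μ ↦ α` with `α(t) = μ(t) - r` for `t < k` and `α(t) = μ(t+r) - r` for
`k ≤ t < k+p-r` is a bijection from the `(k,p)`-shuffles `μ` with `r ≤ μ(0)` (vacuous if
`k = 0`) onto the `(k, p-r)`-shuffles; its inverse sends `α` to `μ` with `μ(t) = α(t)+r` for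
`t < k`, `μ(t) = t-k` for `k ≤ t < k+r`, and `μ(t) = α(t-r)+r` for `k+r ≤ t < k+p`. -/
theorem shuffle_restriction_bijection (k p r : ℕ) (hrp : r ≤ p) :
    ∃ e : {μ : Equiv.Perm (Fin (k + p)) // IsShuffle k μ ∧ (k = 0 ∨ r ≤ permNat μ 0)} ≃
        {α : Equiv.Perm (Fin (k + p - r)) // IsShuffle k α},
      (∀ μ, ∀ t < k + p - r,
        permNat (e μ).1 t =
          if t < k then permNat μ.1 t - r else permNat μ.1 (t + r) - r) ∧
      (∀ α, ∀ t < k + p,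
        permNat (e.symm α).1 t =
          if t < k then permNat α.1 t + r
          else if t < k + r then t - k
          else permNat α.1 (t - r) + r) :=
  ⟨{ toFun := fun μ => ⟨restrictShuffle μ.2.1 μ.2.2 hrp, isShuffle_restrictShuffle μ.2.1 μ.2.2 hrp⟩
     invFun := fun α => ⟨extendShuffle α.1 hrp, isShuffle_extendShuffle α.2 hrp,
       le_permNat_zero_extendShuffle α.1 hrp⟩
     left_inv := fun μ => Subtype.ext (extendShuffle_restrictShuffle μ.2.1 μ.2.2 hrp)
     right_inv := fun α => Subtype.ext (restrictShuffle_extendShuffle α.2 hrp) },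
    fun μ _ ht => permNat_restrictShuffle μ.2.1 μ.2.2 hrp ht,
    fun α _ ht => permNat_extendShuffle α.1 hrp ht⟩
end

section
/- In the simplicial category Δ, with μ a (k,p)-shuffle satisfying r ≤ μ(0) and α the corresponding (k, p-r)-shuffle, the identity s^{μ(k)} ∘ ... ∘ s^{μ(p+k-1)} ∘ d^{r-1} ∘ ... ∘ d^0 = s^{α(k)} ∘ ... ∘ s^{α(p+k-r-1)} holds as maps [p+k-r] → [k]. -/
/-- The coface map `d^i : [n-1] → [n]` of the simplex category, as the order-preserving
injection of natural numbers skipping `i`. -/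
def coface (i : ℕ) : ℕ → ℕ := fun x => if x < i then x else x + 1

/-- The codegeneracy map `s^i : [n+1] → [n]` of the simplex category, as the order-preserving
surjection of natural numbers repeating `i`. -/
def codegen (i : ℕ) : ℕ → ℕ := fun x => if x ≤ i then x else x - 1

/-- The composite `d^{l₀} ∘ d^{l₁} ∘ ⋯` of cofaces indexed by a list. -/
def cofaceList (l : List ℕ) : ℕ → ℕ := l.foldr (fun i g => coface i ∘ g) id

/-- The composite `s^{l₀} ∘ s^{l₁} ∘ ⋯` of codegeneracies indexed by a list. -/
def codegenList (l : List ℕ) : ℕ → ℕ := l.foldr (fun i g => codegen i ∘ g) id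

/-! The cofaces `d^{r-1} ⋯ d^0` shift by `r`. Since `r ≤ μ(0)`, the values `0, …, r-1` are
taken on the second block of `μ`, which is increasing with `μ(k+t) ≥ t`; hence `μ(k+j) = j` for
`j < r`. Commuting the remaining codegeneracies past the shift lowers their indices by `r`, which
turns them into `α(k+t) = μ(k+r+t) - r`, and then `s^0 ⋯ s^{r-1}` undoes the shift. -/

lemma codegenList_append (l₁ l₂ : List ℕ) :
    codegenList (l₁ ++ l₂) = codegenList l₁ ∘ codegenList l₂ := by
  simp only [codegenList, List.foldr_append]
  induction l₁ with
  | nil => rfl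
  | cons a l ih => simp only [List.foldr_cons, ih, Function.comp_assoc]

lemma cofaceList_range_reverse (r x : ℕ) : cofaceList (List.range r).reverse x = x + r := by
  induction r with
  | zero => rfl
  | succ n ih =>
    simp only [cofaceList, List.range_succ, List.reverse_append, List.reverse_singleton,
      List.singleton_append, List.foldr_cons, Function.comp_apply] at ih ⊢
    rw [ih, coface, if_neg (by omega)]
    omega

lemma codegenList_range (r x : ℕ) : codegenList (List.range r) x = x - r := by
  induction r generalizing x with
  | zero => rfl
  | succ n ih =>
    rw [List.range_succ, codegenList_append, Function.comp_apply, ih]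
    simp only [codegenList, List.foldr_cons, List.foldr_nil, Function.comp_apply, id, codegen]
    split <;> omega

lemma codegen_add_of_le {a r : ℕ} (h : r ≤ a) (x : ℕ) :
    codegen a (x + r) = codegen (a - r) x + r := by
  simp only [codegen]
  split <;> split <;> omega

lemma codegenList_add {r : ℕ} {l : List ℕ} (h : ∀ a ∈ l, r ≤ a) (x : ℕ) :
    codegenList l (x + r) = codegenList (l.map (· - r)) x + r := by
  induction l with
  | nil => rfl
  | cons a l ih =>
    simp only [List.forall_mem_cons] at h
    simp only [List.map_cons, codegenList, List.foldr_cons, Function.comp_apply] at ih ⊢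
    rw [ih h.2, codegen_add_of_le h.1]

theorem codegenList_range_append_comp_cofaceList {r : ℕ} {l : List ℕ} (h : ∀ a ∈ l, r ≤ a) :
    codegenList (List.range r ++ l) ∘ cofaceList (List.range r).reverse =
      codegenList (l.map (· - r)) := by
  funext x
  rw [Function.comp_apply, cofaceList_range_reverse, codegenList_append, Function.comp_apply,
    codegenList_add h, codegenList_range, Nat.add_sub_cancel]

lemma StrictMono.eq_self_of_Iio_subset_range {f : ℕ → ℕ} (hf : StrictMono f) {r : ℕ}
    (hr : ∀ j < r, j ∈ Set.range f) : ∀ j < r, f j = j := by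
  intro j
  induction j using Nat.strong_induction_on with
  | _ j ih =>
    intro hj
    obtain ⟨i, hi⟩ := hr j hj
    rcases lt_or_ge i j with hij | hji
    · have := ih i hij (hij.trans hj)
      omega
    · have := hf.monotone hji
      have := hf.id_le j
      simp only [id] at this
      omega

namespace IsShuffle

variable {a n : ℕ} {γ : Equiv.Perm (Fin n)}

lemma permNat_zero_le (h : IsShuffle a γ) {m : Fin n} (hm : (m : ℕ) < a) :
    permNat γ 0 ≤ γ m := by
  have hn : 0 < n := m.pos
  rw [permNat, dif_pos hn]
  rcases Nat.eq_zero_or_pos (m : ℕ) with hm0 | hm0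
  · rw [show m = ⟨0, hn⟩ from Fin.ext hm0]
  · exact (h.1 ⟨0, hn⟩ m hm0 hm).le

/-- Past the end of `Fin n`, `permNat` is the identity, which keeps the sequence increasing. -/
lemma strictMono_permNat_add (h : IsShuffle a γ) : StrictMono fun t => permNat γ (a + t) := by
  refine strictMono_nat_of_lt_succ fun t => ?_
  simp only [permNat, ← add_assoc]
  by_cases ht : a + t + 1 < n
  · rw [dif_pos (by omega), dif_pos ht]
    exact h.2 ⟨a + t, by omega⟩ ⟨a + t + 1, ht⟩ (by simp) (by simp)
  · rw [dif_neg ht]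
    split
    · exact (Fin.isLt _).trans_le (by omega)
    · omega

lemma mem_range_permNat_add (h : IsShuffle a γ) {r : ℕ} (h0 : a = 0 ∨ r ≤ permNat γ 0)
    (hrn : r ≤ n) {j : ℕ} (hj : j < r) : j ∈ Set.range fun t => permNat γ (a + t) := by
  obtain ⟨m, hγm⟩ : ∃ m, (γ m : ℕ) = j := ⟨γ.symm ⟨j, by omega⟩, by simp⟩
  have ham : a ≤ m := by
    by_contra! hma
    have := h.permNat_zero_le hma
    omega
  refine ⟨m - a, ?_⟩
  show permNat γ (a + (m - a)) = j
  rw [permNat, dif_pos (by omega), ← hγm]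
  congr 2
  exact Fin.ext (Nat.add_sub_cancel' ham)

end IsShuffle

theorem codegen_coface_interchange_second_general (k p r : ℕ) (hrp : r ≤ p)
    (μ : Equiv.Perm (Fin (k + p))) (hμ : IsShuffle k μ)
    (hr0 : k = 0 ∨ r ≤ permNat μ 0)
    (α : Equiv.Perm (Fin (k + p - r)))
    (hform : ∀ t < k + p - r,
      permNat α t = if t < k then permNat μ t - r else permNat μ (t + r) - r) :
    ∀ x ≤ p + k - r,
      (codegenList ((List.range p).map (fun t => permNat μ (k + t))) ∘
        cofaceList (List.range r).reverse) x =
      codegenList ((List.range (p - r)).map (fun t => permNat α (k + t))) x := by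
  intro x _
  set f := fun t => permNat μ (k + t)
  have hf : StrictMono f := hμ.strictMono_permNat_add
  have hfix : ∀ j < r, f j = j := hf.eq_self_of_Iio_subset_range fun _ hj =>
    hμ.mem_range_permNat_add hr0 (by omega) hj
  have hsplit : (List.range p).map f =
      List.range r ++ (List.range (p - r)).map (fun t => f (r + t)) := by
    conv_lhs => rw [← Nat.add_sub_cancel' hrp, List.range_add, List.map_append, List.map_map]
    congr 1
    exact (List.map_congr_left fun j hj => hfix j (List.mem_range.1 hj)).trans (List.map_id' _)
  have hge : ∀ a ∈ (List.range (p - r)).map (fun t => f (r + t)), r ≤ a := by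
    simp only [List.mem_map]
    rintro _ ⟨t, -, rfl⟩
    exact (Nat.le_add_right r t).trans (hf.id_le _)
  have hshift : ((List.range (p - r)).map (fun t => f (r + t))).map (· - r) =
      (List.range (p - r)).map (fun t => permNat α (k + t)) := by
    rw [List.map_map]
    refine List.map_congr_left fun t ht => ?_
    have ht : t < p - r := List.mem_range.1 ht
    rw [hform (k + t) (by omega), if_neg (by omega), Function.comp_apply, show k + t + r = k + (r + t) by omega]
  rw [hsplit, codegenList_range_append_comp_cofaceList hge, hshift]

/-- For a `(k,p)`-shuffle `μ` with `r ≤ μ(0)` and corresponding `(k, p-r)`-shuffle `α`,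
the identity `s^{μ(k)} ⋯ s^{μ(p+k-1)} d^{r-1} ⋯ d^0 = s^{α(k)} ⋯ s^{α(p+k-r-1)}`
holds as maps `[p+k-r] → [k]`. -/
theorem codegen_coface_interchange_second (k p r : ℕ) (hrp : r ≤ p)
    (μ : Equiv.Perm (Fin (k + p))) (hμ : IsShuffle k μ)
    (hr0 : k = 0 ∨ r ≤ permNat μ 0)
    (α : Equiv.Perm (Fin (k + p - r))) (hα : IsShuffle k α)
    (hform : ∀ t < k + p - r,
      permNat α t = if t < k then permNat μ t - r else permNat μ (t + r) - r) :
    ∀ x ≤ p + k - r,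
      (codegenList ((List.range p).map (fun t => permNat μ (k + t))) ∘
        cofaceList (List.range r).reverse) x =
      codegenList ((List.range (p - r)).map (fun t => permNat α (k + t))) x :=
  codegen_coface_interchange_second_general k p r hrp μ hμ hr0 α hform
end

section
/- Explicitly, for a (k,p)-shuffle μ and r ≤ p, the map f = s^{μ(0)} ∘ ... ∘ s^{μ(k-1)} ∘ d^{p+k} ∘ ... ∘ d^{r+1} : [r] → [p] satisfies f(i) = i for i ≤ μ(0), f(i) = i - t for i ∈ (μ(t-1), μ(t)], and f(i) = i - k for i > μ(k-1). -/
lemma coface_of_lt {i x : ℕ} (h : x < i) : coface i x = x := if_pos h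

lemma codegen_of_le {i x : ℕ} (h : x ≤ i) : codegen i x = x := if_pos h

lemma codegen_of_lt {i x : ℕ} (h : i < x) : codegen i x = x - 1 := if_neg (not_le.2 h)

lemma cofaceList_cons (a : ℕ) (l : List ℕ) : cofaceList (a :: l) = coface a ∘ cofaceList l :=
  rfl

lemma codegenList_cons (a : ℕ) (l : List ℕ) : codegenList (a :: l) = codegen a ∘ codegenList l :=
  rfl

lemma cofaceList_apply_of_forall_lt {l : List ℕ} {x : ℕ} (h : ∀ j ∈ l, x < j) :
    cofaceList l x = x := by
  induction l with
  | nil => rfl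
  | cons a l ih =>
    rw [cofaceList_cons, Function.comp_apply, ih fun j hj => h j (List.mem_cons_of_mem a hj),
      coface_of_lt (h a List.mem_cons_self)]

lemma List.countP_lt_le_sub_of_pairwise {l : List ℕ} (hl : l.Pairwise (· < ·)) {b : ℕ}
    (hb : ∀ j ∈ l, b ≤ j) (x : ℕ) : l.countP (· < x) ≤ x - b := by
  induction l generalizing b with
  | nil => simp
  | cons a l ih =>
    rw [List.pairwise_cons] at hl
    have hab : b ≤ a := hb a List.mem_cons_self
    have htail := ih hl.2 (b := a + 1) hl.1
    rw [List.countP_cons]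
    split_ifs with h <;> simp only [decide_eq_true_eq] at h <;> omega

lemma codegenList_apply_of_pairwise {l : List ℕ} (hl : l.Pairwise (· < ·)) (x : ℕ) :
    codegenList l x = x - l.countP (· < x) := by
  induction l with
  | nil => simp [codegenList]
  | cons a l ih =>
    rw [List.pairwise_cons] at hl
    have hcount := List.countP_lt_le_sub_of_pairwise hl.2 (b := a + 1) hl.1 x
    rw [codegenList_cons, Function.comp_apply, ih hl.2, List.countP_cons]
    by_cases hax : a < x
    · rw [codegen_of_lt (by omega), if_pos (decide_eq_true hax)]
      omega
    · rw [codegen_of_le (by omega), if_neg (by simpa using hax)]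
      omega

lemma List.countP_range_lt (k t : ℕ) : (List.range k).countP (· < t) = min k t := by
  induction k with
  | zero => simp
  | succ k ih =>
    rw [List.range_succ, List.countP_append, ih]
    by_cases hkt : k < t <;> simp [hkt] <;> omega

section StrictMonoOn

variable {f : ℕ → ℕ} {k : ℕ} (hf : StrictMonoOn f (Set.Iio k))
include hf

lemma List.pairwise_map_range_of_strictMonoOn : ((List.range k).map f).Pairwise (· < ·) :=
  List.pairwise_map.2 <| List.pairwise_lt_range.imp_of_mem fun ha hb hab =>
    hf (List.mem_range.1 ha) (List.mem_range.1 hb) hab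

lemma List.countP_map_range_lt_of_strictMonoOn {t x : ℕ} (htk : t ≤ k)
    (hlo : 0 < t → f (t - 1) < x) (hhi : t < k → x ≤ f t) :
    ((List.range k).map f).countP (· < x) = t := by
  have hiff : ∀ s ∈ List.range k, decide (f s < x) = true ↔ decide (s < t) = true := by
    intro s hs
    rw [List.mem_range] at hs
    simp only [decide_eq_true_eq]
    constructor
    · intro hsx
      by_contra! hts
      have hft : f t ≤ f s := hf.monotoneOn (show t < k by omega) hs hts
      have := hhi (by omega)
      omega
    · intro hst
      have hfs : f s ≤ f (t - 1) := hf.monotoneOn hs (show t - 1 < k by omega) (by omega)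
      have := hlo (by omega)
      omega
  rw [List.countP_map, Function.comp_def, List.countP_congr hiff, List.countP_range_lt]
  omega

end StrictMonoOn

lemma IsShuffle.strictMonoOn_permNat {k p : ℕ} {μ : Equiv.Perm (Fin (k + p))}
    (hμ : IsShuffle k μ) : StrictMonoOn (permNat μ) (Set.Iio k) := by
  intro c hc d hd hcd
  simp only [Set.mem_Iio] at hc hd
  simp only [permNat, dif_pos (show c < k + p by omega), dif_pos (show d < k + p by omega)]
  exact hμ.1 ⟨c, _⟩ ⟨d, _⟩ hcd hd

lemma codegenList_comp_cofaceList_apply {k p r : ℕ} {μ : Equiv.Perm (Fin (k + p))}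
    (hμ : IsShuffle k μ) {t i : ℕ} (hi : i ≤ r) (htk : t ≤ k)
    (hlo : 0 < t → permNat μ (t - 1) < i) (hhi : t < k → i ≤ permNat μ t) :
    (codegenList ((List.range k).map (permNat μ)) ∘
      cofaceList ((List.range (p + k - r)).map (fun t => p + k - t))) i = i - t := by
  have hcoface : cofaceList ((List.range (p + k - r)).map (fun t => p + k - t)) i = i := by
    refine cofaceList_apply_of_forall_lt fun j hj => ?_
    obtain ⟨s, hs, rfl⟩ := List.mem_map.1 hj
    rw [List.mem_range] at hs
    omega
  have hmono := hμ.strictMonoOn_permNat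
  rw [Function.comp_apply, hcoface,
    codegenList_apply_of_pairwise (List.pairwise_map_range_of_strictMonoOn hmono),
    List.countP_map_range_lt_of_strictMonoOn hmono htk hlo hhi]

theorem codegen_coface_formula_general (k p r : ℕ)
    (μ : Equiv.Perm (Fin (k + p))) (hμ : IsShuffle k μ) :
    letI f : ℕ → ℕ :=
      codegenList ((List.range k).map (permNat μ)) ∘
        cofaceList ((List.range (p + k - r)).map (fun t => p + k - t))
    (∀ i ≤ r, (k = 0 ∨ i ≤ permNat μ 0) → f i = i) ∧
    (∀ t, 1 ≤ t → t < k → ∀ i ≤ r, permNat μ (t - 1) < i → i ≤ permNat μ t → f i = i - t) ∧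
    (∀ i ≤ r, 0 < k → permNat μ (k - 1) < i → f i = i - k) := by
  refine ⟨fun i hi h0 => ?_, fun t _ htk i hi hlo hhi => ?_, fun i hi _ hlo => ?_⟩
  · exact codegenList_comp_cofaceList_apply hμ hi (Nat.zero_le k) (absurd · (lt_irrefl 0))
      fun hk => h0.resolve_left (by omega)
  · exact codegenList_comp_cofaceList_apply hμ hi htk.le (fun _ => hlo) fun _ => hhi
  · exact codegenList_comp_cofaceList_apply hμ hi le_rfl (fun _ => hlo) (absurd · (lt_irrefl k))

/-- The map `f = s^{μ(0)} ∘ ⋯ ∘ s^{μ(k-1)} ∘ d^{p+k} ∘ ⋯ ∘ d^{r+1} : [r] → [p]` satisfies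
`f(i) = i` for `i ≤ μ(0)`, `f(i) = i - t` for `μ(t-1) < i ≤ μ(t)`, and `f(i) = i - k`
for `i > μ(k-1)`. -/
theorem codegen_coface_formula (k p r : ℕ) (hrp : r ≤ p)
    (μ : Equiv.Perm (Fin (k + p))) (hμ : IsShuffle k μ) :
    letI f : ℕ → ℕ :=
      codegenList ((List.range k).map (permNat μ)) ∘
        cofaceList ((List.range (p + k - r)).map (fun t => p + k - t))
    (∀ i ≤ r, (k = 0 ∨ i ≤ permNat μ 0) → f i = i) ∧
    (∀ t, 1 ≤ t → t < k → ∀ i ≤ r, permNat μ (t - 1) < i → i ≤ permNat μ t → f i = i - t) ∧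
    (∀ i ≤ r, 0 < k → permNat μ (k - 1) < i → f i = i - k) :=
  codegen_coface_formula_general k p r μ hμ
end
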